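/- For every n ∈ ℕ and every σ₀ > 0 there exists a constant c > 0 such that for every σ ≥ σ₀ and every real polynomial Q of degree at most n, sup_{x∈ℝ} p_{σ²}(x)|Q(x)| ≤ c (∫_ℝ p_{σ²}(x) Q(x)² dx)^{1/2}, where p_{σ²}(x) = (2πσ²)^{-1/2} exp(−x²/(2σ²)). -/

import Mathlib

open MeasureTheory Real Polynomial
open scoped NNReal

noncomputable section

/-- The centered Gaussian density on `ℝ` with variance `σ²`. -/
def gaussDensVar (v x : ℝ) : ℝ := (Real.sqrt (2 * π * v))⁻¹ * Real.exp (-x ^ 2 / (2 * v))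

/-!
The substitution `x = σu` turns `p_{σ²}(x)` into `σ⁻¹ p_1(u)` and `Q` into a polynomial of the same
degree, so it suffices to treat the standard Gaussian; the factor `σ⁻¹ ≤ σ₀⁻¹` makes the constant
uniform in `σ ≥ σ₀`. For the standard Gaussian, `p_1(x) |x|^k ≤ k! e^{1/2}` bounds `p_1 |Q|` by a
multiple of the largest coefficient of `Q`. The map sending a polynomial to its class in
`L²(N(0,1))` is injective, so on the finite-dimensional space of polynomials of degree `≤ n` it is
antilipschitz: the coefficients are controlled by the `L²` norm.
-/

open ProbabilityTheory

namespace Polynomial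

variable {μ : Measure ℝ}

theorem memLp_eval (hμ : ∀ k : ℕ, MemLp (fun x : ℝ ↦ x ^ k) 2 μ) (Q : ℝ[X]) :
    MemLp (fun x ↦ Q.eval x) 2 μ := by
  simp_rw [eval_eq_sum_range]
  exact memLp_finsetSum _ fun i _ ↦ (hμ i).const_mul _

def toLp (hμ : ∀ k : ℕ, MemLp (fun x : ℝ ↦ x ^ k) 2 μ) :
    ℝ[X] →ₗ[ℝ] Lp ℝ 2 μ where
  toFun Q := (memLp_eval hμ Q).toLp _
  map_add' P Q := by simp_rw [eval_add]; exact MemLp.toLp_add _ _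
  map_smul' a Q := by simp_rw [eval_smul, smul_eq_mul]; exact MemLp.toLp_const_smul a _

variable (hμ : ∀ k : ℕ, MemLp (fun x : ℝ ↦ x ^ k) 2 μ)

theorem toLp_apply (Q : ℝ[X]) : toLp hμ Q = (memLp_eval hμ Q).toLp _ := rfl

theorem norm_toLp (Q : ℝ[X]) : ‖toLp hμ Q‖ = (∫ x, Q.eval x ^ 2 ∂μ) ^ (1 / 2 : ℝ) := by
  rw [toLp_apply, Lp.norm_toLp,
    (memLp_eval hμ Q).eLpNorm_eq_integral_rpow_norm two_ne_zero ENNReal.ofNat_ne_top,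
    ENNReal.toReal_ofReal (by positivity)]
  simp

theorem toLp_injective (hac : volume ≪ μ) : Function.Injective (toLp hμ) := by
  rw [← LinearMap.ker_eq_bot, LinearMap.ker_eq_bot']
  intro Q hQ
  have hμ0 : (fun x ↦ Q.eval x) =ᵐ[μ] 0 :=
    (memLp_eval hμ Q).coeFn_toLp.symm.trans (Lp.eq_zero_iff_ae_eq_zero.1 hQ)
  have h0 : (fun x ↦ Q.eval x) = 0 :=
    (Q.continuous.ae_eq_iff_eq volume continuous_const).1 (hac.ae_eq hμ0)
  exact Polynomial.funext fun x ↦ by simpa using congrFun h0 x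

theorem exists_norm_degreeLTEquiv_le (hac : volume ≪ μ) (n : ℕ) :
    ∃ K : ℝ, 0 < K ∧ ∀ (Q : ℝ[X]) (hQ : Q ∈ degreeLT ℝ n),
      ‖degreeLTEquiv ℝ n ⟨Q, hQ⟩‖ ≤ K * ‖toLp hμ Q‖ := by
  let f := toLp hμ ∘ₗ (degreeLT ℝ n).subtype ∘ₗ (degreeLTEquiv ℝ n).symm.toLinearMap
  have hf : Function.Injective f :=
    (toLp_injective hμ hac).comp (Subtype.val_injective.comp (degreeLTEquiv ℝ n).symm.injective)
  obtain ⟨K, hK, hfK⟩ := f.exists_antilipschitzWith (LinearMap.ker_eq_bot.2 hf)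
  refine ⟨K, hK, fun Q hQ ↦ ?_⟩
  simpa [f] using hfK.le_mul_norm (map_zero f) (degreeLTEquiv ℝ n ⟨Q, hQ⟩)

end Polynomial

theorem gaussDensVar_nonneg (v x : ℝ) : 0 ≤ gaussDensVar v x := by
  unfold gaussDensVar
  positivity

theorem gaussDensVar_one_mul_abs_pow_le (k : ℕ) (x : ℝ) :
    gaussDensVar 1 x * |x| ^ k ≤ k.factorial * exp (1 / 2) := by
  have hnorm : (√(2 * π))⁻¹ ≤ 1 := inv_le_one_of_one_le₀ (one_le_sqrt.2 (by linarith [pi_gt_three]))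
  have hpow : |x| ^ k ≤ k.factorial * exp |x| := by
    have := pow_div_factorial_le_exp |x| (abs_nonneg x) k
    rwa [div_le_iff₀ (by positivity), mul_comm] at this
  calc gaussDensVar 1 x * |x| ^ k ≤ 1 * exp (-x ^ 2 / 2) * (k.factorial * exp |x|) := by
        unfold gaussDensVar
        rw [mul_one, mul_one]
        gcongr
    _ = k.factorial * exp (|x| - x ^ 2 / 2) := by rw [sub_eq_add_neg, exp_add]; ring_nf
    _ ≤ k.factorial * exp (1 / 2) := by
        gcongr
        nlinarith [sq_nonneg (|x| - 1), sq_abs x]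

theorem memLp_pow_gaussianReal (m : ℝ) (v : ℝ≥0) (k : ℕ) :
    MemLp (fun x : ℝ ↦ x ^ k) 2 (gaussianReal m v) := by
  refine (memLp_two_iff_integrable_sq (by fun_prop)).2 ?_
  convert (memLp_id_gaussianReal (μ := m) (v := v) (2 * k : ℕ)).integrable_norm_pow' using 2 with x
  rw [norm_eq_abs, ← pow_mul, id, Even.pow_abs ⟨k, by ring⟩, mul_comm]

theorem exists_gaussDensVar_one_mul_abs_eval_le (n : ℕ) :
    ∃ c > 0, ∀ Q : ℝ[X], Q.natDegree ≤ n → ∀ x : ℝ,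
      gaussDensVar 1 x * |Q.eval x| ≤ c * (∫ y, Q.eval y ^ 2 ∂gaussianReal 0 1) ^ (1 / 2 : ℝ) := by
  obtain ⟨K, hK, hcoeff⟩ := exists_norm_degreeLTEquiv_le (memLp_pow_gaussianReal 0 1)
    (gaussianReal_absolutelyContinuous' 0 one_ne_zero) (n + 1)
  refine ⟨K * ∑ i : Fin (n + 1), (i : ℕ).factorial * exp (1 / 2), by positivity, fun Q hQ x ↦ ?_⟩
  have hQ' : Q ∈ degreeLT ℝ (n + 1) := by
    rw [degreeLT_succ_eq_degreeLE, mem_degreeLE]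
    exact natDegree_le_iff_degree_le.1 hQ
  set r := degreeLTEquiv ℝ (n + 1) ⟨Q, hQ'⟩
  rw [← norm_toLp (memLp_pow_gaussianReal 0 1)]
  calc gaussDensVar 1 x * |Q.eval x|
      ≤ gaussDensVar 1 x * ∑ i, |r i * x ^ (i : ℕ)| := by
        rw [eval_eq_sum_degreeLTEquiv hQ']
        gcongr
        · exact gaussDensVar_nonneg 1 x
        · exact Finset.abs_sum_le_sum_abs _ _
    _ = ∑ i, |r i| * (gaussDensVar 1 x * |x| ^ (i : ℕ)) := by
        rw [Finset.mul_sum]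
        congr with i
        rw [abs_mul, abs_pow]
        ring
    _ ≤ ∑ i : Fin (n + 1), ‖r‖ * ((i : ℕ).factorial * exp (1 / 2)) :=
        Finset.sum_le_sum fun i _ ↦ mul_le_mul (norm_le_pi_norm r i)
          (gaussDensVar_one_mul_abs_pow_le i x)
          (mul_nonneg (gaussDensVar_nonneg 1 x) (by positivity)) (norm_nonneg r)
    _ ≤ K * ‖toLp (memLp_pow_gaussianReal 0 1) Q‖ *
          ∑ i : Fin (n + 1), (i : ℕ).factorial * exp (1 / 2) := by
        rw [← Finset.mul_sum]
        gcongr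
        exact hcoeff Q hQ'
    _ = _ := by ring

theorem gaussDensVar_sq {σ : ℝ} (hσ : 0 < σ) (x : ℝ) :
    gaussDensVar (σ ^ 2) x = σ⁻¹ * gaussDensVar 1 (x / σ) := by
  unfold gaussDensVar
  rw [show 2 * π * σ ^ 2 = (2 * π * 1) * σ ^ 2 by ring, sqrt_mul (by positivity), sqrt_sq hσ.le]
  field_simp

theorem integral_gaussDensVar_sq_mul {σ : ℝ} (hσ : 0 < σ) (f : ℝ → ℝ) :
    ∫ y, gaussDensVar (σ ^ 2) y * f y = ∫ u, f (σ * u) ∂gaussianReal 0 1 := by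
  have hemb : MeasurableEmbedding (σ * ·) := (Homeomorph.mulLeft₀ σ hσ.ne').measurableEmbedding
  rw [← hemb.integral_map, gaussianReal_map_const_mul, integral_gaussianReal_eq_integral_smul
    (by simpa [← NNReal.coe_ne_zero] using hσ.ne')]
  congr with y
  simp [gaussianPDFReal, gaussDensVar]

/-- for every `n` and `σ₀ > 0` there is `c > 0` such that for all `σ ≥ σ₀`
and all real polynomials `Q` of degree at most `n`,
`sup_x p_{σ²}(x) |Q(x)| ≤ c (∫ p_{σ²}(x) Q(x)² dx)^{1/2}`. -/
theorem gaussian_weighted_sup_le_L2 (n : ℕ) (σ₀ : ℝ) (hσ₀ : 0 < σ₀) :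
    ∃ c : ℝ, 0 < c ∧ ∀ σ : ℝ, σ₀ ≤ σ → ∀ Q : Polynomial ℝ, Q.natDegree ≤ n →
      ∀ x : ℝ, gaussDensVar (σ ^ 2) x * |Q.eval x| ≤
        c * (∫ y : ℝ, gaussDensVar (σ ^ 2) y * (Q.eval y) ^ 2) ^ (1 / 2 : ℝ) := by
  obtain ⟨c, hc, hstd⟩ := exists_gaussDensVar_one_mul_abs_eval_le n
  refine ⟨c / σ₀, by positivity, fun σ hσ Q hQ x ↦ ?_⟩
  have hσpos : 0 < σ := hσ₀.trans_le hσ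
  set R := Q.comp (C σ * X)
  have hR : R.natDegree ≤ n := by
    rwa [natDegree_comp, natDegree_C_mul_X σ hσpos.ne', mul_one]
  have hRx : R.eval (x / σ) = Q.eval x := by simp [R, mul_div_cancel₀ x hσpos.ne']
  have hRint :
      ∫ u, R.eval u ^ 2 ∂gaussianReal 0 1 = ∫ u, Q.eval (σ * u) ^ 2 ∂gaussianReal 0 1 := by
    simp [R]
  rw [gaussDensVar_sq hσpos, integral_gaussDensVar_sq_mul hσpos, ← hRx, ← hRint]
  calc σ⁻¹ * gaussDensVar 1 (x / σ) * |R.eval (x / σ)|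
      ≤ σ⁻¹ * (c * (∫ u, R.eval u ^ 2 ∂gaussianReal 0 1) ^ (1 / 2 : ℝ)) := by
        rw [mul_assoc]
        exact mul_le_mul_of_nonneg_left (hstd R hR _) (by positivity)
    _ ≤ σ₀⁻¹ * (c * (∫ u, R.eval u ^ 2 ∂gaussianReal 0 1) ^ (1 / 2 : ℝ)) := by gcongr
    _ = c / σ₀ * (∫ u, R.eval u ^ 2 ∂gaussianReal 0 1) ^ (1 / 2 : ℝ) := by ring
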